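/- arXiv:1102.5424 — 4 statements merged into one kernel-verified Lean document; each statement's English description precedes it below -/
import Mathlib

section
/- In any pseudo hoop, for all a, b, c: (a ⇝ b) ⇝ (a ⇝ c) = (b ⇝ a) ⇝ (b ⇝ c), and dually (a → b) → (a → c) = (b → a) → (b → c). -/
universe u

structure PseudoHoop (M : Type u) where
  mul : M → M → M
  one : M
  imp : M → M → M
  rimp : M → M → M
  mul_one : ∀ x, mul x one = x
  one_mul : ∀ x, mul one x = x
  imp_self : ∀ x, imp x x = one
  rimp_self : ∀ x, rimp x x = one
  mul_imp : ∀ x y z, imp (mul x y) z = imp x (imp y z)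
  mul_rimp : ∀ x y z, rimp (mul x y) z = rimp y (rimp x z)
  div1 : ∀ x y, mul (imp x y) x = mul (imp y x) y
  div2 : ∀ x y, mul (imp x y) x = mul x (rimp x y)
  div3 : ∀ x y, mul x (rimp x y) = mul y (rimp y x)

namespace PseudoHoop

variable {M : Type u} (H : PseudoHoop M)

/-- The induced order: x ≤ y iff x → y = 1. -/
def le (x y : M) : Prop := H.imp x y = H.one

/-- The derived meet: x ∧ y = (x → y) ⊙ x. -/
def meet (x y : M) : M := H.mul (H.imp x y) x

/-- Powers: a^0 = 1, a^(n+1) = a^n ⊙ a. -/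
def pow (a : M) : ℕ → M
  | 0 => H.one
  | n + 1 => H.mul (pow a n) a

/-- j is the least upper bound of x and y. -/
def IsJoin (x y j : M) : Prop :=
  H.le x j ∧ H.le y j ∧ ∀ c, H.le x c → H.le y c → H.le j c

/-- Prelinearity: (x→y) ∨ (y→x) and (x⇝y) ∨ (y⇝x) exist and equal 1. -/
def Prelinear : Prop :=
  ∀ x y, H.IsJoin (H.imp x y) (H.imp y x) H.one ∧ H.IsJoin (H.rimp x y) (H.rimp y x) H.one

/-- Basic pseudo hoop. -/
def Basic : Prop :=
  (∀ x y z, H.le (H.imp (H.imp x y) z) (H.imp (H.imp (H.imp y x) z) z)) ∧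
  (∀ x y z, H.le (H.rimp (H.rimp x y) z) (H.rimp (H.rimp (H.rimp y x) z) z))

/-- Filters: contain 1, closed under ⊙ and upward closed. -/
def IsFilter (F : Set M) : Prop :=
  H.one ∈ F ∧ (∀ x ∈ F, ∀ y ∈ F, H.mul x y ∈ F) ∧ (∀ x ∈ F, ∀ y, H.le x y → y ∈ F)

/-- Filter generated by a set. -/
def filterGen (S : Set M) : Set M := ⋂₀ {F | H.IsFilter F ∧ S ⊆ F}

/-- Prime filter. -/
def IsPrime (F : Set M) : Prop :=
  H.IsFilter F ∧
    ∀ F₁ F₂, H.IsFilter F₁ → H.IsFilter F₂ → F₁ ∩ F₂ ⊆ F → F₁ ⊆ F ∨ F₂ ⊆ F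

/-- V is a value of g: a filter maximal with respect to not containing g. -/
def IsValueOf (V : Set M) (g : M) : Prop :=
  H.IsFilter V ∧ g ∉ V ∧ ∀ W, H.IsFilter W → V ⊆ W → g ∉ W → W = V

/-- V is a value of M: a value of some g ≠ 1. -/
def IsValue (V : Set M) : Prop := ∃ g, g ≠ H.one ∧ H.IsValueOf V g

end PseudoHoop

theorem pseudoHoop_exchange_identity {M : Type u} (H : PseudoHoop M) :
    ∀ a b c : M,
      H.rimp (H.rimp a b) (H.rimp a c) = H.rimp (H.rimp b a) (H.rimp b c) ∧
      H.imp (H.imp a b) (H.imp a c) = H.imp (H.imp b a) (H.imp b c) := by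
  intro a b c
  constructor
  · have h := congrArg (fun x => H.rimp x c) (H.div3 a b)
    simpa [H.mul_rimp] using h
  · have h := congrArg (fun x => H.imp x c) (H.div1 a b)
    simpa [H.mul_imp] using h
end

section
/- If a pseudo hoop M satisfies prelinearity, then ⊙ distributes over ∧ from both sides: z ⊙ (x ∧ y) = (z ⊙ x) ∧ (z ⊙ y) and (x ∧ y) ⊙ z = (x ⊙ z) ∧ (y ⊙ z) for all x, y, z ∈ M. -/
universe u

namespace PseudoHoop

variable {M : Type u} (H : PseudoHoop M)

lemma antisymm' {x y : M} (h1 : H.imp x y = H.one) (h2 : H.imp y x = H.one) : x = y := by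
  have h := H.div1 x y
  rw [h1, h2, H.one_mul, H.one_mul] at h
  exact h

lemma one_imp (x : M) : H.imp H.one x = x := by
  apply H.antisymm'
  · have h := H.mul_imp (H.imp H.one x) H.one x
    rw [H.mul_one, H.imp_self] at h
    exact h
  · have h := H.mul_imp x H.one x
    rw [H.mul_one, H.imp_self] at h
    exact h.symm

lemma one_rimp (x : M) : H.rimp H.one x = x := by
  have h1 : H.rimp (H.rimp H.one x) x = H.one := by
    have h := H.mul_rimp H.one (H.rimp H.one x) x
    rw [H.one_mul, H.rimp_self] at h
    exact h
  have h2 : H.rimp x (H.rimp H.one x) = H.one := by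
    have h := H.mul_rimp H.one x x
    rw [H.one_mul, H.rimp_self] at h
    exact h.symm
  have h := H.div3 (H.rimp H.one x) x
  rw [h1, h2, H.mul_one, H.mul_one] at h
  exact h

lemma imp_one (x : M) : H.imp x H.one = H.one := by
  have hx : H.mul (H.imp x H.one) x = x := by
    rw [H.div1, H.mul_one, H.one_imp]
  have h := H.mul_imp (H.imp x H.one) x H.one
  rw [hx, H.imp_self] at h
  exact h

lemma rimp_one (x : M) : H.rimp x H.one = H.one := by
  have hx : H.mul x (H.rimp x H.one) = x := by
    rw [H.div3, H.one_mul, H.one_rimp]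
  have h := H.mul_rimp x (H.rimp x H.one) H.one
  rw [hx, H.rimp_self] at h
  exact h

lemma le_trans' {x y z : M} (h1 : H.imp x y = H.one) (h2 : H.imp y z = H.one) :
    H.imp x z = H.one := by
  have hx : x = H.mul (H.imp y x) y := by
    have h := H.div1 x y
    rw [h1, H.one_mul] at h
    exact h
  rw [hx, H.mul_imp, h2, H.imp_one]

lemma rle_trans' {x y z : M} (h1 : H.rimp x y = H.one) (h2 : H.rimp y z = H.one) :
    H.rimp x z = H.one := by
  have hx : x = H.mul y (H.rimp y x) := by
    have h := H.div3 x y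
    rw [h1, H.mul_one] at h
    exact h
  rw [hx, H.mul_rimp, h2, H.rimp_one]

lemma imp_eq_one_iff {x y : M} : H.imp x y = H.one ↔ H.rimp x y = H.one := by
  constructor
  · intro h
    have hx : H.mul x (H.rimp x y) = x := by
      have h2 := H.div2 x y
      rw [h, H.one_mul] at h2
      exact h2.symm
    have h2 := H.mul_rimp x (H.rimp x y) y
    rw [hx, H.rimp_self] at h2
    exact h2
  · intro h
    have hx : H.mul (H.imp x y) x = x := by
      rw [H.div2, h, H.mul_one]
    have h2 := H.mul_imp (H.imp x y) x y
    rw [hx, H.imp_self] at h2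
    exact h2

lemma mul_assoc' (a b c : M) : H.mul (H.mul a b) c = H.mul a (H.mul b c) := by
  have key : ∀ z, H.imp (H.mul (H.mul a b) c) z = H.imp (H.mul a (H.mul b c)) z := by
    intro z
    simp only [H.mul_imp]
  apply H.antisymm'
  · rw [key, H.imp_self]
  · rw [← key, H.imp_self]

lemma mul_le_mul_right' {a b : M} (h : H.imp a b = H.one) (z : M) :
    H.imp (H.mul a z) (H.mul b z) = H.one := by
  rw [H.mul_imp]
  exact H.le_trans' h (by rw [← H.mul_imp, H.imp_self])

lemma mul_le_mul_left' {a b : M} (h : H.imp a b = H.one) (z : M) :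
    H.imp (H.mul z a) (H.mul z b) = H.one := by
  rw [H.imp_eq_one_iff, H.mul_rimp]
  exact H.rle_trans' (H.imp_eq_one_iff.mp h) (by rw [← H.mul_rimp, H.rimp_self])

lemma meet_le_left' (x y : M) : H.imp (H.meet x y) x = H.one := by
  show H.imp (H.mul (H.imp x y) x) x = H.one
  have h := H.mul_le_mul_right' (H.imp_one (H.imp x y)) x
  rw [H.one_mul] at h
  exact h

lemma meet_le_right' (x y : M) : H.imp (H.meet x y) y = H.one := by
  show H.imp (H.mul (H.imp x y) x) y = H.one
  rw [H.div1]
  have h := H.mul_le_mul_right' (H.imp_one (H.imp y x)) y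
  rw [H.one_mul] at h
  exact h

lemma le_meet' {c x y : M} (hx : H.imp c x = H.one) (hy : H.imp c y = H.one) :
    H.imp c (H.meet x y) = H.one := by
  have hc : c = H.mul (H.imp x c) x := by
    have h := H.div1 c x
    rw [hx, H.one_mul] at h
    exact h
  have h1 : H.imp (H.imp x c) (H.imp x y) = H.one := by
    rw [← H.mul_imp, ← hc]
    exact hy
  have h := H.mul_le_mul_right' h1 x
  rw [← hc] at h
  exact h

lemma le_rimp_of {t u g : M} (h : H.imp (H.mul t u) g = H.one) :
    H.imp u (H.rimp t g) = H.one := by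
  rw [H.imp_eq_one_iff, ← H.mul_rimp, ← H.imp_eq_one_iff]
  exact h

lemma le_imp_of {t u g : M} (h : H.imp (H.mul u t) g = H.one) :
    H.imp u (H.imp t g) = H.one := by
  rw [← H.mul_imp]
  exact h

lemma meet_eq_rimp (x y : M) : H.meet x y = H.mul x (H.rimp x y) := H.div2 x y

lemma meet_eq_rimp' (x y : M) : H.meet x y = H.mul y (H.rimp y x) :=
  (H.div2 x y).trans (H.div3 x y)

lemma meet_eq_imp' (x y : M) : H.meet x y = H.mul (H.imp y x) y := H.div1 x y

lemma left_distrib' (hpre : H.Prelinear) (x y z : M) :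
    H.mul z (H.meet x y) = H.meet (H.mul z x) (H.mul z y) := by
  apply H.antisymm'
  · exact H.le_meet' (H.mul_le_mul_left' (H.meet_le_left' x y) z)
      (H.mul_le_mul_left' (H.meet_le_right' x y) z)
  · have key1 : H.imp (H.mul (H.meet (H.mul z x) (H.mul z y)) (H.rimp x y))
        (H.mul z (H.meet x y)) = H.one := by
      have h1 := H.mul_le_mul_right' (H.meet_le_left' (H.mul z x) (H.mul z y)) (H.rimp x y)
      have e : H.mul (H.mul z x) (H.rimp x y) = H.mul z (H.meet x y) := by
        rw [H.mul_assoc', H.meet_eq_rimp]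
      rw [e] at h1
      exact h1
    have key2 : H.imp (H.mul (H.meet (H.mul z x) (H.mul z y)) (H.rimp y x))
        (H.mul z (H.meet x y)) = H.one := by
      have h1 := H.mul_le_mul_right' (H.meet_le_right' (H.mul z x) (H.mul z y)) (H.rimp y x)
      have e : H.mul (H.mul z y) (H.rimp y x) = H.mul z (H.meet x y) := by
        rw [H.mul_assoc', H.meet_eq_rimp']
      rw [e] at h1
      exact h1
    have hj := (hpre x y).2
    have hc : H.imp H.one (H.rimp (H.meet (H.mul z x) (H.mul z y)) (H.mul z (H.meet x y)))
        = H.one := hj.2.2 _ (H.le_rimp_of key1) (H.le_rimp_of key2)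
    have hr : H.rimp (H.meet (H.mul z x) (H.mul z y)) (H.mul z (H.meet x y)) = H.one :=
      (H.one_imp _).symm.trans hc
    exact H.imp_eq_one_iff.mpr hr

lemma right_distrib' (hpre : H.Prelinear) (x y z : M) :
    H.mul (H.meet x y) z = H.meet (H.mul x z) (H.mul y z) := by
  apply H.antisymm'
  · exact H.le_meet' (H.mul_le_mul_right' (H.meet_le_left' x y) z)
      (H.mul_le_mul_right' (H.meet_le_right' x y) z)
  · have key1 : H.imp (H.mul (H.imp x y) (H.meet (H.mul x z) (H.mul y z)))
        (H.mul (H.meet x y) z) = H.one := by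
      have h1 := H.mul_le_mul_left' (H.meet_le_left' (H.mul x z) (H.mul y z)) (H.imp x y)
      have e : H.mul (H.imp x y) (H.mul x z) = H.mul (H.meet x y) z := by
        rw [← H.mul_assoc']
        rfl
      rw [e] at h1
      exact h1
    have key2 : H.imp (H.mul (H.imp y x) (H.meet (H.mul x z) (H.mul y z)))
        (H.mul (H.meet x y) z) = H.one := by
      have h1 := H.mul_le_mul_left' (H.meet_le_right' (H.mul x z) (H.mul y z)) (H.imp y x)
      have e : H.mul (H.imp y x) (H.mul y z) = H.mul (H.meet x y) z := by
        rw [← H.mul_assoc', ← H.meet_eq_imp']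
      rw [e] at h1
      exact h1
    have hj := (hpre x y).1
    have hc : H.imp H.one (H.imp (H.meet (H.mul x z) (H.mul y z)) (H.mul (H.meet x y) z))
        = H.one := hj.2.2 _ (H.le_imp_of key1) (H.le_imp_of key2)
    exact (H.one_imp _).symm.trans hc

end PseudoHoop

theorem pseudoHoop_prelinear_mul_distrib_meet {M : Type u} (H : PseudoHoop M)
    (hpre : H.Prelinear) :
    ∀ x y z : M,
      H.mul z (H.meet x y) = H.meet (H.mul z x) (H.mul z y) ∧
      H.mul (H.meet x y) z = H.meet (H.mul x z) (H.mul y z) := by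
  intro x y z
  exact ⟨H.left_distrib' hpre x y z, H.right_distrib' hpre x y z⟩
end

section
/- Every pseudo hoop satisfies the Riesz Decomposition Property: if b ⊙ c ≤ a, then there exist b₁ ≥ b and c₁ ≥ c with a = b₁ ⊙ c₁. Explicitly, one may take b₁ = ((c → a) ⇝ a) → a and c₁ = (c → a) ⇝ a. -/
universe u

section Aux

variable {M : Type u} (H : PseudoHoop M)

lemma ph_one_imp_imp (y z : M) : H.imp H.one (H.imp y z) = H.imp y z := by
  have h := H.mul_imp H.one y z
  rw [H.one_mul] at h
  exact h.symm

lemma ph_dB (x : M) : H.imp H.one x = H.mul (H.imp x H.one) x := by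
  have h := H.div1 x H.one
  rw [H.mul_one] at h
  exact h.symm

lemma ph_C (x : M) : H.imp (H.imp H.one x) H.one = H.one := by
  rw [ph_dB, H.mul_imp]
  exact H.imp_self _

lemma ph_imp_one_imp_one (x : M) : H.imp (H.imp x H.one) H.one = H.one := by
  have h := ph_C H (H.imp x H.one)
  rwa [ph_one_imp_imp] at h

lemma ph_rimp_of_imp (x y : M) (h : H.imp x y = H.one) : H.rimp x y = H.one := by
  have hx : H.mul x (H.rimp x y) = x := by
    rw [← H.div2, h, H.one_mul]
  have h2 := H.mul_rimp x (H.rimp x y) y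
  rw [hx] at h2
  rw [h2]
  exact H.rimp_self _

lemma ph_imp_of_rimp (x y : M) (h : H.rimp x y = H.one) : H.imp x y = H.one := by
  have hx : H.mul (H.imp x y) x = x := by
    rw [H.div2, h, H.mul_one]
  have h2 := H.mul_imp (H.imp x y) x y
  rw [hx] at h2
  rw [h2]
  exact H.imp_self _

lemma ph_one_rimp_eq (x : M) : H.rimp H.one x = H.imp H.one x := by
  rw [ph_dB, H.div2, H.div3, H.one_mul]

lemma ph_one_imp (x : M) : H.imp H.one x = x := by
  have step1 : H.imp (H.imp H.one x) x = H.one := by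
    rw [ph_dB, H.mul_imp, H.imp_self]
    exact ph_imp_one_imp_one H x
  have step3 : H.rimp x (H.rimp H.one x) = H.one := by
    have h := H.mul_rimp H.one x x
    rw [H.one_mul, H.rimp_self] at h
    exact h.symm
  have step4 : H.imp x (H.imp H.one x) = H.one := by
    rw [← ph_one_rimp_eq]
    exact ph_imp_of_rimp H _ _ step3
  have h := H.div1 (H.imp H.one x) x
  rw [step1, step4, H.one_mul, H.one_mul] at h
  exact h

lemma ph_imp_one (x : M) : H.imp x H.one = H.one := by
  have h := ph_C H x
  rwa [ph_one_imp] at h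

lemma ph_le_trans (x y z : M) (hxy : H.imp x y = H.one)
    (hyz : H.imp y z = H.one) : H.imp x z = H.one := by
  have hx : x = H.mul (H.imp y x) y := by
    have h := H.div1 x y
    rw [hxy, H.one_mul] at h
    exact h
  rw [hx, H.mul_imp, hyz]
  exact ph_imp_one H _

end Aux

theorem pseudoHoop_RDP {M : Type u} (H : PseudoHoop M) :
    ∀ a b c : M, H.le (H.mul b c) a →
      H.le b (H.imp (H.rimp (H.imp c a) a) a) ∧
      H.le c (H.rimp (H.imp c a) a) ∧
      a = H.mul (H.imp (H.rimp (H.imp c a) a) a) (H.rimp (H.imp c a) a) := by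
  intro a b c h
  have h0 : H.imp (H.mul b c) a = H.one := h
  -- b ≤ c → a
  have hbt : H.imp b (H.imp c a) = H.one := by
    rw [← H.mul_imp]; exact h0
  -- notation: t := imp c a, s := rimp t a, r := imp s a
  -- (c→a) ≤ s → a
  have htr : H.imp (H.imp c a) (H.imp (H.rimp (H.imp c a) a) a) = H.one := by
    rw [← H.mul_imp, H.div3]
    -- goal: imp (mul a (rimp a (imp c a))) a = 1
    rw [H.mul_imp]
    have := ph_imp_one H (H.rimp a (H.imp c a))
    calc H.imp a (H.imp (H.rimp a (H.imp c a)) a)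
        = H.imp (H.mul a (H.rimp a (H.imp c a))) a := (H.mul_imp _ _ _).symm
      _ = H.imp (H.mul (H.imp a (H.imp c a)) a) a := by rw [H.div2]
      _ = H.imp (H.imp a (H.imp c a)) (H.imp a a) := H.mul_imp _ _ _
      _ = H.one := by rw [H.imp_self]; exact ph_imp_one H _
  -- goal 2 (rimp form): c ≤ s
  have hc : H.rimp c (H.rimp (H.imp c a) a) = H.one := by
    have h2 := H.mul_rimp (H.imp c a) c a
    rw [H.div2] at h2
    rw [← h2]
    have h3 := H.mul_rimp c (H.rimp c a) a
    rw [h3]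
    exact H.rimp_self _
  -- a ≤ s
  have has : H.imp a (H.rimp (H.imp c a) a) = H.one := by
    apply ph_imp_of_rimp
    have h2 := H.mul_rimp (H.imp c a) a a
    rw [← h2]
    apply ph_rimp_of_imp
    rw [H.mul_imp, H.imp_self]
    exact ph_imp_one H _
  refine ⟨?_, ?_, ?_⟩
  · exact ph_le_trans H _ _ _ hbt htr
  · exact ph_imp_of_rimp H _ _ hc
  · have h4 := H.div1 (H.rimp (H.imp c a) a) a
    rw [has, H.one_mul] at h4
    exact h4.symm
end

section
/- On the negative cone G⁻ of a lattice-ordered group G, with x ⊙ y := xy, x → y := (yx⁻¹) ∧ e, x ⇝ y := (x⁻¹y) ∧ e, the structure (G⁻; ⊙, →, ⇝, e) is a cancellative pseudo hoop, and it satisfies the identity (x → y) ⇝ y = (x ⇝ y) → y. -/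
theorem negativeCone_cancellative_pseudoHoop {G : Type*} [Group G] [Lattice G]
    [CovariantClass G G (· * ·) (· ≤ ·)]
    [CovariantClass G G (Function.swap (· * ·)) (· ≤ ·)] :
    let imp : G → G → G := fun x y => (y * x⁻¹) ⊓ 1
    let rimp : G → G → G := fun x y => (x⁻¹ * y) ⊓ 1
    (∀ x y : G, x ≤ 1 → y ≤ 1 → x * y ≤ 1) ∧
    (∀ x y : G, imp x y ≤ 1 ∧ rimp x y ≤ 1) ∧
    (∀ x : G, x ≤ 1 → x * 1 = x ∧ 1 * x = x) ∧
    (∀ x : G, x ≤ 1 → imp x x = 1 ∧ rimp x x = 1) ∧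
    (∀ x y z : G, x ≤ 1 → y ≤ 1 → z ≤ 1 → imp (x * y) z = imp x (imp y z)) ∧
    (∀ x y z : G, x ≤ 1 → y ≤ 1 → z ≤ 1 → rimp (x * y) z = rimp y (rimp x z)) ∧
    (∀ x y : G, x ≤ 1 → y ≤ 1 →
      imp x y * x = imp y x * y ∧ imp x y * x = x * rimp x y ∧
      x * rimp x y = y * rimp y x) ∧
    (∀ x y z : G, x ≤ 1 → y ≤ 1 → z ≤ 1 → (x * y = x * z → y = z) ∧ (y * x = z * x → y = z)) ∧
    (∀ x y : G, x ≤ 1 → y ≤ 1 → rimp (imp x y) y = imp (rimp x y) y) := by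
  intro imp rimp
  have himp : ∀ x y : G, imp x y * x = y ⊓ x := by
    intro x y; simp only [imp, inf_mul, inv_mul_cancel_right, one_mul]
  have hrimp : ∀ x y : G, x * rimp x y = y ⊓ x := by
    intro x y
    simp only [rimp, mul_inf, mul_inv_cancel_left, mul_one]
  refine ⟨?_, ?_, ?_, ?_, ?_, ?_, ?_, ?_, ?_⟩
  · intro x y hx hy
    calc x * y ≤ 1 * 1 := mul_le_mul' hx hy
    _ = 1 := one_mul 1
  · intro x y; exact ⟨inf_le_right, inf_le_right⟩
  · intro x _; exact ⟨mul_one x, one_mul x⟩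
  · intro x _
    constructor
    · simp [imp]
    · simp [rimp]
  · intro x y z _ _ _
    have hx : (1:G) ≤ x⁻¹ := one_le_inv'.mpr ‹x ≤ 1›
    simp only [imp, inf_mul, one_mul, mul_inv_rev, inf_assoc, mul_assoc]
    rw [inf_eq_right.mpr hx]
  · intro x y z _ _ _
    have hy : (1:G) ≤ y⁻¹ := one_le_inv'.mpr ‹y ≤ 1›
    simp only [rimp, mul_inf, mul_one, mul_inv_rev, ← mul_assoc]
    rw [inf_assoc, inf_eq_right.mpr hy]
  · intro x y _ _
    refine ⟨?_, ?_, ?_⟩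
    · rw [himp, himp, inf_comm]
    · rw [himp, hrimp]
    · rw [hrimp, hrimp, inf_comm]
  · intro x y z _ _ _
    exact ⟨fun h => mul_left_cancel h, fun h => mul_right_cancel h⟩
  · intro x y _ _
    have h1 : rimp (imp x y) y = (x ⊔ y) ⊓ 1 := by
      simp only [rimp, imp, inv_inf, inv_inv, inv_one, sup_mul, one_mul,
        mul_inv_rev, inv_mul_cancel_right]
    have h2 : imp (rimp x y) y = (x ⊔ y) ⊓ 1 := by
      simp only [imp, rimp, inv_inf, inv_inv, inv_one, mul_sup, mul_one,
        mul_inv_rev, mul_inv_cancel_left]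
    rw [h1, h2]
end
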